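/- Fix m ∈ ℕ, let n = m(m+1)/2, define c_0,...,c_n by Π_{i=1}^m(1-X^i) = Σ_i c_i X^i, and set d_j = Σ_{i=0}^{n-j} c_i. Then for every non-empty subset S of {1,...,m}: Σ_{j=1}^n d_j · r(j,S) equals 1 if S = {1,...,m}, and 0 otherwise, where r(j,S) is the number of partitions of j whose set of parts is exactly S. -/

import Mathlib

/-- `rCount k S` is the number of partitions of `k` whose set of parts is exactly `S`. -/
noncomputable def rCount (k : ℕ) (S : Finset ℕ) : ℕ :=
  Nat.card {P : Nat.Partition k // P.parts.toFinset = S}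

/-!
For `S` a finite set of positive integers, the generating function `R_S = ∑ₖ r(k, S) Xᵏ` equals
`∏_{s ∈ S} Xˢ / (1 - Xˢ)`, which we prove as `(1 - Xᵃ) R_S = Xᵃ R_{S \ {a}}` for `a ∈ S`. Hence
for `S ⊆ T`, `Δ_T · R_S = X^{Σ S} ∏_{t ∈ T \ S} (1 - Xᵗ)` is a polynomial of degree at most
`n = Σ T`. The sum `∑_{j ≤ n} d_j r(j, S)` is the sum of the coefficients of degree `≤ n` of
`Δ_T · R_S`, i.e. the value of this polynomial at `1`, which vanishes unless `S = T`.
-/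

open Finset PowerSeries

theorem Finset.insert_eq_iff_eq_or_eq_erase {α : Type*} [DecidableEq α] {a : α} {s t : Finset α}
    (ha : a ∈ s) : insert a t = s ↔ t = s ∨ t = s.erase a := by
  constructor
  · rintro rfl
    by_cases hat : a ∈ t
    · exact Or.inl (insert_eq_of_mem hat).symm
    · exact Or.inr (erase_insert hat).symm
  · rintro (rfl | rfl)
    exacts [insert_eq_of_mem ha, insert_erase ha]

theorem Polynomial.coe_prod {R ι : Type*} [CommSemiring R] (s : Finset ι) (f : ι → Polynomial R) :
    ((∏ i ∈ s, f i : Polynomial R) : R⟦X⟧) = ∏ i ∈ s, (f i : R⟦X⟧) :=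
  map_prod Polynomial.coeToPowerSeries.ringHom f s

theorem PowerSeries.sum_range_coeff_mul {R : Type*} [CommSemiring R] (f g : R⟦X⟧) (N : ℕ) :
    ∑ k ∈ range N, coeff k (f * g) =
      ∑ j ∈ range N, (∑ i ∈ range (N - j), coeff i f) * coeff j g := by
  rw [mul_comm f g]
  simp_rw [coeff_mul, Nat.sum_antidiagonal_eq_sum_range_succ_mk, Nat.succ_eq_add_one,
    sum_range_diag_flip N (fun i j ↦ coeff i g * coeff j f), sum_mul, mul_comm (coeff _ f)]

theorem Finset.sum_Icc_one_id (m : ℕ) : ∑ t ∈ Icc 1 m, t = m * (m + 1) / 2 := by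
  have h := sum_range_id (m + 1)
  rw [range_eq_Ico, sum_eq_sum_Ico_succ_bot (Nat.succ_pos m)] at h
  simpa [Ico_add_one_right_eq_Icc, mul_comm] using h

theorem rCount_eq_zero_of_lt {k a : ℕ} {S : Finset ℕ} (ha : a ∈ S) (hk : k < a) :
    rCount k S = 0 := by
  refine Nat.card_eq_zero.mpr (Or.inl ⟨fun P ↦ ?_⟩)
  have : a ∈ P.1.parts := by rw [← Multiset.mem_toFinset, P.2]; exact ha
  exact (Nat.Partition.le_of_mem_parts this).not_gt hk

theorem rCount_empty (k : ℕ) : rCount k ∅ = if k = 0 then 1 else 0 := by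
  split_ifs with hk
  · subst hk
    simp [rCount]
  · refine Nat.card_eq_zero.mpr (Or.inl ⟨fun P ↦ hk ?_⟩)
    rw [← P.1.parts_sum, Multiset.toFinset_eq_empty.mp P.2, Multiset.sum_zero]

/-- Removing one copy of `a` from a partition with set of parts `S` leaves a partition whose set of
parts is `S` or `S.erase a`, according as `a` occurred more than once or not. -/
theorem rCount_eq_add {k a : ℕ} {S : Finset ℕ} (ha : a ∈ S) (ha0 : 0 < a) (hak : a ≤ k) :
    rCount k S = rCount (k - a) S + rCount (k - a) (S.erase a) := by
  classical
  let e := Nat.Partition.partitionWithPartEquiv ha0 hak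
  have he : ∀ P, P.1.parts.toFinset = insert a (e P).parts.toFinset := fun P ↦ by
    have hP := Nat.Partition.partitionWithPartEquiv_symm_apply_parts ha0 hak (e P)
    rw [e.symm_apply_apply] at hP
    rw [hP, Multiset.toFinset_cons]
  have hmem : ∀ {P : Nat.Partition k}, P.parts.toFinset = S → a ∈ P.parts := fun hP ↦ by
    rw [← Multiset.mem_toFinset, hP]; exact ha
  have hdisj : S ≠ S.erase a := fun h ↦ notMem_erase a S (h ▸ ha)
  calc rCount k S
      = Nat.card {q : (k - a).Partition // insert a q.parts.toFinset = S} :=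
        Nat.card_congr <| (Equiv.subtypeSubtypeEquivSubtype hmem).symm.trans <|
          e.subtypeEquiv fun P ↦ by rw [he]
    _ = Nat.card {q : (k - a).Partition // q.parts.toFinset = S ∨
          q.parts.toFinset = S.erase a} := by
        simp_rw [insert_eq_iff_eq_or_eq_erase ha]
    _ = _ := by
        rw [rCount, rCount, Nat.card_eq_fintype_card, Nat.card_eq_fintype_card,
          Nat.card_eq_fintype_card, Fintype.card_subtype_or_disjoint]
        exact fun _ hS hS' q hq ↦ hdisj ((hS q hq).symm.trans (hS' q hq))

noncomputable def rCountSeries (S : Finset ℕ) : ℤ⟦X⟧ :=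
  PowerSeries.mk fun k ↦ (rCount k S : ℤ)

theorem rCountSeries_empty : rCountSeries ∅ = 1 := by
  ext k
  simp [rCountSeries, rCount_empty, coeff_one]

theorem one_sub_X_pow_mul_rCountSeries {a : ℕ} {S : Finset ℕ} (ha : a ∈ S) (ha0 : 0 < a) :
    (1 - X ^ a) * rCountSeries S = X ^ a * rCountSeries (S.erase a) := by
  ext k
  rw [sub_mul, one_mul, map_sub, coeff_X_pow_mul', coeff_X_pow_mul']
  simp only [rCountSeries, coeff_mk]
  split_ifs with hak
  · rw [rCount_eq_add ha ha0 hak]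
    push_cast
    ring
  · rw [rCount_eq_zero_of_lt ha (not_le.mp hak)]
    simp

theorem prod_one_sub_X_pow_mul_rCountSeries {S : Finset ℕ} (hS : ∀ s ∈ S, 0 < s) :
    (∏ s ∈ S, (1 - X ^ s)) * rCountSeries S = X ^ ∑ s ∈ S, s := by
  classical
  induction S using Finset.induction_on with
  | empty => simp [rCountSeries_empty]
  | insert a T haT ih =>
    rw [prod_insert haT, sum_insert haT, mul_comm (1 - X ^ a), mul_assoc,
      one_sub_X_pow_mul_rCountSeries (mem_insert_self a T) (hS a (mem_insert_self a T)),
      erase_insert haT, mul_left_comm, ih fun s hs ↦ hS s (mem_insert_of_mem hs), pow_add]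

theorem prod_one_sub_X_pow_mul_rCountSeries_of_subset {S T : Finset ℕ} (hST : S ⊆ T)
    (hT : ∀ t ∈ T, 0 < t) :
    ((∏ t ∈ T, (1 - Polynomial.X ^ t) : Polynomial ℤ) : ℤ⟦X⟧) * rCountSeries S =
      ((Polynomial.X ^ (∑ s ∈ S, s) * ∏ t ∈ T \ S, (1 - Polynomial.X ^ t) : Polynomial ℤ) :
        ℤ⟦X⟧) := by
  push_cast [Polynomial.coe_prod]
  rw [← prod_sdiff hST, mul_assoc, prod_one_sub_X_pow_mul_rCountSeries fun s hs ↦ hT s (hST hs),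
    mul_comm]

theorem Polynomial.natDegree_prod_one_sub_X_pow_le {R : Type*} [CommRing R] (s : Finset ℕ) :
    (∏ t ∈ s, (1 - Polynomial.X ^ t : Polynomial R)).natDegree ≤ ∑ t ∈ s, t := by
  refine (natDegree_prod_le _ _).trans (sum_le_sum fun t _ ↦ ?_)
  exact (natDegree_sub_le _ _).trans (max_le (by simp) (natDegree_X_pow_le t))

theorem sum_Icc_partialSum_mul_rCount {S T : Finset ℕ} (hS : S.Nonempty) (hST : S ⊆ T)
    (hT : ∀ t ∈ T, 0 < t) :
    ∑ j ∈ Icc 1 (∑ t ∈ T, t), (∑ i ∈ range (∑ t ∈ T, t - j + 1),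
        (∏ t ∈ T, (1 - Polynomial.X ^ t : Polynomial ℤ)).coeff i) * (rCount j S : ℤ) =
      if S = T then 1 else 0 := by
  set N := ∑ t ∈ T, t
  set Δ : Polynomial ℤ := ∏ t ∈ T, (1 - Polynomial.X ^ t)
  set Q : Polynomial ℤ := Polynomial.X ^ (∑ s ∈ S, s) * ∏ t ∈ T \ S, (1 - Polynomial.X ^ t)
  have hΔR : (Δ : ℤ⟦X⟧) * rCountSeries S = Q :=
    prod_one_sub_X_pow_mul_rCountSeries_of_subset hST hT
  have hQdeg : Q.natDegree < N + 1 := by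
    refine Nat.lt_succ_of_le <| Polynomial.natDegree_mul_le.trans ?_
    calc _ ≤ (∑ s ∈ S, s) + ∑ t ∈ T \ S, t := add_le_add (Polynomial.natDegree_X_pow_le _)
          (Polynomial.natDegree_prod_one_sub_X_pow_le _)
      _ = N := by rw [add_comm, sum_sdiff hST]
  have hr0 : rCount 0 S = 0 := by
    obtain ⟨a, ha⟩ := hS
    exact rCount_eq_zero_of_lt ha (hT a (hST ha))
  calc _ = ∑ j ∈ range (N + 1), (∑ i ∈ range (N + 1 - j), coeff i (Δ : ℤ⟦X⟧)) *
          coeff j (rCountSeries S) := by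
        rw [range_eq_Ico, sum_eq_sum_Ico_succ_bot (Nat.succ_pos N), zero_add,
          Nat.succ_eq_add_one, Ico_add_one_right_eq_Icc]
        simp only [rCountSeries, coeff_mk, hr0, Nat.cast_zero, mul_zero, zero_add,
          Polynomial.coeff_coe]
        refine sum_congr rfl fun j hj ↦ ?_
        rw [Nat.sub_add_comm (mem_Icc.mp hj).2]
    _ = ∑ k ∈ range (N + 1), Q.coeff k := by
        simp_rw [← sum_range_coeff_mul, hΔR, Polynomial.coeff_coe]
    _ = Q.eval 1 := by simp [Polynomial.eval_eq_sum_range' hQdeg]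
    _ = if S = T then 1 else 0 := by
        simp only [Q, Polynomial.eval_mul, Polynomial.eval_pow, Polynomial.eval_X, one_pow,
          one_mul, Polynomial.eval_prod, Polynomial.eval_sub, Polynomial.eval_one, sub_self,
          prod_const, zero_pow_eq, card_eq_zero, sdiff_eq_empty_iff_subset]
        exact if_congr ⟨hST.antisymm, fun h ↦ h ▸ subset_rfl⟩ rfl rfl

/-- Fix `m`, let `n = m(m+1)/2`, let `c_i` be the coefficients of
`∏_{i=1}^m (1 - Xⁱ)` and set `d_j = ∑_{i=0}^{n-j} c_i`. For every non-empty subset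
`S ⊆ {1,...,m}`: `∑_{j=1}^n d_j r(j,S)` equals `1` if `S = {1,...,m}` and `0` otherwise. -/
theorem rCount_d_sum (m : ℕ) (S : Finset ℕ) (hS : S.Nonempty)
    (hSm : S ⊆ Finset.Icc 1 m) :
    (∑ j ∈ Finset.Icc 1 (m * (m + 1) / 2),
        (∑ i ∈ Finset.range (m * (m + 1) / 2 - j + 1),
            (∏ t ∈ Finset.Icc 1 m, (1 - Polynomial.X ^ t : Polynomial ℤ)).coeff i) *
          (rCount j S : ℤ)) =
      if S = Finset.Icc 1 m then 1 else 0 := by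
  rw [← sum_Icc_one_id]
  exact sum_Icc_partialSum_mul_rCount hS hSm fun t ht ↦ (mem_Icc.mp ht).1
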